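/- Let f(x) be a monic polynomial with integer coefficients whose constant coefficient f(0) is coprime to an integer m ≥ 2. Then there exist an integer k ≥ 1 and polynomials g(x), r(x) with integer coefficients such that f(x)·g(x) + m·r(x) = x^k − 1. -/

import Mathlib

/-!
Reduce modulo `m`: in the finite ring `(ZMod m)[X] ⧸ (f)` the class of `X` is a unit, because
`f(0)` is invertible mod `m`, so it has some finite order `k`. Then `f ∣ X ^ k - 1` mod `m`, and
lifting the cofactor to `ℤ[X]` leaves an error divisible by `m`.
-/

open Polynomial

theorem Polynomial.isUnit_of_aeval_eq_zero_of_isUnit_coeff_zero {R A : Type*} [CommRing R]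
    [CommRing A] [Algebra R A] {p : R[X]} {a : A} (hp : aeval a p = 0) (h0 : IsUnit (p.coeff 0)) :
    IsUnit a := by
  have hsplit : a * aeval a p.divX = -algebraMap R A (p.coeff 0) := by
    have := congrArg (aeval a) (X_mul_divX_add p)
    rw [map_add, map_mul, aeval_X, aeval_C, hp] at this
    exact eq_neg_of_add_eq_zero_left this
  exact isUnit_of_mul_isUnit_left (hsplit ▸ (h0.map _).neg)

theorem Polynomial.Monic.exists_dvd_X_pow_sub_one {R : Type*} [CommRing R] [Finite R]
    {p : R[X]} (hp : p.Monic) (h0 : IsUnit (p.coeff 0)) :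
    ∃ k, 0 < k ∧ p ∣ X ^ k - 1 := by
  have := hp.finite_adjoinRoot
  have : Finite (AdjoinRoot p) := Module.finite_of_finite R
  obtain ⟨u, hu⟩ := isUnit_of_aeval_eq_zero_of_isUnit_coeff_zero
    (AdjoinRoot.aeval_eq p ▸ AdjoinRoot.mk_self) h0
  refine ⟨orderOf u, orderOf_pos u, ?_⟩
  rw [← AdjoinRoot.mk_eq_zero, map_sub, map_pow, AdjoinRoot.mk_X, map_one, ← hu,
    ← Units.val_pow_eq_pow_val, pow_orderOf_eq_one, Units.val_one, sub_self]

theorem Polynomial.exists_mul_add_C_mul_eq_of_map_dvd {n : ℕ} {f h : ℤ[X]}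
    (hdvd : f.map (Int.castRingHom (ZMod n)) ∣ h.map (Int.castRingHom (ZMod n))) :
    ∃ g r : ℤ[X], f * g + C (n : ℤ) * r = h := by
  obtain ⟨G, hG⟩ := hdvd
  obtain ⟨g, rfl⟩ := map_surjective (Int.castRingHom (ZMod n)) ZMod.intCast_surjective G
  have hker : h - f * g ∈ RingHom.ker (mapRingHom (Int.castRingHom (ZMod n))) := by
    simp [hG]
  rw [ker_mapRingHom, ZMod.ker_intCastRingHom, Ideal.map_span, Set.image_singleton,
    Ideal.mem_span_singleton] at hker
  obtain ⟨r, hr⟩ := hker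
  exact ⟨g, r, by linear_combination -hr⟩

theorem stmt_5 (f : Polynomial ℤ) (hf : f.Monic) (m : ℤ) (hm : 2 ≤ m)
    (hcop : Int.gcd (f.coeff 0) m = 1) :
    ∃ (k : ℕ), 1 ≤ k ∧ ∃ (g r : Polynomial ℤ),
      f * g + C m * r = X ^ k - 1 := by
  lift m to ℕ using by omega
  have : NeZero m := ⟨by omega⟩
  have hunit : IsUnit ((f.map (Int.castRingHom (ZMod m))).coeff 0) := by
    rw [coeff_map, eq_intCast, ZMod.coe_int_isUnit_iff_isCoprime, Int.isCoprime_iff_gcd_eq_one,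
      Int.gcd_comm, hcop]
  obtain ⟨k, hk, hdvd⟩ := (hf.map _).exists_dvd_X_pow_sub_one hunit
  refine ⟨k, hk, exists_mul_add_C_mul_eq_of_map_dvd ?_⟩
  simpa using hdvd
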